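/- arXiv:1909.07588 — 5 statements merged into one kernel-verified Lean document; each statement's English description precedes it below -/
import Mathlib

section
/- Let p ≥ 1 and let f : ℝ^p → ℝ be differentiable with gradient ∇f that is L-Lipschitz (L > 0). Let α > 0, θ ∈ ℝ^p, and let ε, e ∈ ℝ^p be arbitrary vectors. Set θ' = θ - α·(∇f(θ) - ε + e). Then f(θ') - f(θ) ≤ -(α/2)‖∇f(θ)‖₂² + α‖e‖₂² + (L/2 - 1/(2α))‖θ' - θ‖₂² + α‖ε‖₂². -/
open intervalIntegral Set RealInnerProductSpace

lemma descent_lemma {E : Type*} [NormedAddCommGroup E] [InnerProductSpace ℝ E] [CompleteSpace E]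
    (f : E → ℝ) (f' : E → E) (hgrad : ∀ x, HasGradientAt f (f' x) x)
    (L : ℝ) (hL : 0 ≤ L) (hlip : ∀ x y, ‖f' x - f' y‖ ≤ L * ‖x - y‖)
    (x y : E) :
    f y - f x ≤ inner ℝ (f' x) (y - x) + L / 2 * ‖y - x‖ ^ 2 := by
  set d := y - x with hd
  have hcont : Continuous f' := by
    have : LipschitzWith (Real.toNNReal L) f' := by
      intro a b
      rw [edist_nndist, edist_nndist, ← ENNReal.coe_mul, ENNReal.coe_le_coe,
        ← NNReal.coe_le_coe]
      push_cast
      calc dist (f' a) (f' b) ≤ L * dist a b := by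
            simpa [dist_eq_norm] using hlip a b
        _ ≤ max L 0 * dist a b :=
            mul_le_mul_of_nonneg_right (le_max_left L 0) dist_nonneg
        _ = Real.toNNReal L * dist a b := by
            rw [Real.coe_toNNReal']
    exact this.continuous
  set c : ℝ → E := fun t => x + t • d with hc
  have hcderiv : ∀ t : ℝ, HasDerivAt c d t := by
    intro t
    simpa [hc] using ((hasDerivAt_id t).smul_const d).const_add x
  set g : ℝ → ℝ := fun t => (inner ℝ (f' (c t)) d : ℝ) with hg
  have hder : ∀ t : ℝ, HasDerivAt (fun t => f (c t)) (g t) t := by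
    intro t
    have h1 := (hgrad (c t)).hasFDerivAt.comp_hasDerivAt t (hcderiv t)
    exact h1
  have hgcont : Continuous g := by
    exact (Continuous.inner (hcont.comp (by continuity)) continuous_const)
  have hint : f (c 1) - f (c 0) = ∫ t in (0:ℝ)..1, g t := by
    rw [integral_eq_sub_of_hasDerivAt (fun t _ => hder t)
      (hgcont.intervalIntegrable 0 1)]
  have hbound : ∀ t ∈ Icc (0:ℝ) 1, g t ≤ ⟪f' x, d⟫ + L * t * ‖d‖ ^ 2 := by
    intro t ht
    have : g t - ⟪f' x, d⟫ = ⟪f' (c t) - f' x, d⟫ := by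
      rw [inner_sub_left]
    have hb : ⟪f' (c t) - f' x, d⟫ ≤ L * t * ‖d‖ ^ 2 := by
      calc ⟪f' (c t) - f' x, d⟫ ≤ ‖f' (c t) - f' x‖ * ‖d‖ :=
            real_inner_le_norm _ _
        _ ≤ (L * ‖c t - x‖) * ‖d‖ := by
            gcongr; exact hlip _ _
        _ = L * t * ‖d‖ ^ 2 := by
            have : ‖c t - x‖ = t * ‖d‖ := by
              simp [hc, norm_smul, abs_of_nonneg ht.1]
            rw [this]; ring
    linarith
  have hIc : (∫ t in (0:ℝ)..1, g t) ≤ ∫ t in (0:ℝ)..1, (⟪f' x, d⟫ + L * t * ‖d‖ ^ 2) := by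
    apply integral_mono_on (by norm_num) (hgcont.intervalIntegrable 0 1)
    · exact (Continuous.intervalIntegrable (by continuity) 0 1)
    · exact hbound
  have hIval : (∫ t in (0:ℝ)..1, (⟪f' x, d⟫ + L * t * ‖d‖ ^ 2))
      = ⟪f' x, d⟫ + L / 2 * ‖d‖ ^ 2 := by
    rw [integral_add (intervalIntegrable_const) (Continuous.intervalIntegrable (by continuity) 0 1)]
    simp only [integral_const]
    have : (∫ t in (0:ℝ)..1, L * t * ‖d‖ ^ 2) = L * ‖d‖^2 * ∫ t in (0:ℝ)..1, t := by
      rw [← integral_const_mul]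
      congr 1; ext t; ring
    rw [this, integral_id]
    norm_num; ring
  have hc0 : c 0 = x := by simp [hc]
  have hc1 : c 1 = y := by simp [hc, hd]
  rw [hc0, hc1] at hint
  linarith [hint ▸ le_trans hIc (le_of_eq hIval), hIc.trans (le_of_eq hIval), hint ▸ (hIc.trans (le_of_eq hIval))]


/-- **Lemma 2 (descent of LAQ).** If `f : ℝ^p → ℝ` is differentiable with `L`-Lipschitz
gradient (`L > 0`), `α > 0`, `ε, e ∈ ℝ^p` are arbitrary, and
`θ' = θ - α • (∇f(θ) - ε + e)`, then
`f(θ') - f(θ) ≤ -(α/2)‖∇f(θ)‖² + α‖e‖² + (L/2 - 1/(2α))‖θ' - θ‖² + α‖ε‖²`. -/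
theorem laq_descent (p : ℕ) (hp : 1 ≤ p)
    (f : EuclideanSpace ℝ (Fin p) → ℝ)
    (f' : EuclideanSpace ℝ (Fin p) → EuclideanSpace ℝ (Fin p))
    (hgrad : ∀ x, HasGradientAt f (f' x) x)
    (L : ℝ) (hL : 0 < L)
    (hlip : ∀ x y, ‖f' x - f' y‖ ≤ L * ‖x - y‖)
    (α : ℝ) (hα : 0 < α)
    (θ θ' ε e : EuclideanSpace ℝ (Fin p))
    (hupd : θ' = θ - α • (f' θ - ε + e)) :
    f θ' - f θ ≤ -(α / 2) * ‖f' θ‖ ^ 2 + α * ‖e‖ ^ 2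
      + (L / 2 - 1 / (2 * α)) * ‖θ' - θ‖ ^ 2 + α * ‖ε‖ ^ 2 := by
  have key := descent_lemma f f' hgrad L hL.le hlip θ θ'
  set gθ := f' θ with hgθ
  set d := θ' - θ with hd
  have hsum : d + α • gθ = α • (ε - e) := by
    rw [hd, hupd, smul_sub, smul_add, smul_sub]
    abel
  have h1 : ‖d + α • gθ‖ ^ 2 = ‖d‖ ^ 2 + 2 * (α * inner ℝ gθ d) + α ^ 2 * ‖gθ‖ ^ 2 := by
    rw [norm_add_sq_real, real_inner_smul_right, norm_smul, real_inner_comm]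
    simp [abs_of_pos hα, mul_pow]
  have h2 : ‖d + α • gθ‖ ^ 2 = α ^ 2 * ‖ε - e‖ ^ 2 := by
    rw [hsum, norm_smul]
    simp [abs_of_pos hα, mul_pow]
  have h3 : ‖ε - e‖ ^ 2 ≤ 2 * ‖ε‖ ^ 2 + 2 * ‖e‖ ^ 2 := by
    nlinarith [norm_sub_le ε e, norm_nonneg ε, norm_nonneg e, norm_nonneg (ε - e), sq_nonneg (‖ε‖ - ‖e‖)]
  have h2α : (0:ℝ) < 2 * α := by linarith
  have hinner : (inner ℝ gθ d : ℝ) ≤ α * ‖ε‖ ^ 2 + α * ‖e‖ ^ 2 - (α / 2) * ‖gθ‖ ^ 2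
      - 1 / (2 * α) * ‖d‖ ^ 2 := by
    have h4 : 2 * α * (inner ℝ gθ d : ℝ) ≤ 2 * α ^ 2 * ‖ε‖ ^ 2 + 2 * α ^ 2 * ‖e‖ ^ 2
        - α ^ 2 * ‖gθ‖ ^ 2 - ‖d‖ ^ 2 := by nlinarith [sq_nonneg α]
    have hr : 2 * α * (α * ‖ε‖ ^ 2 + α * ‖e‖ ^ 2 - (α / 2) * ‖gθ‖ ^ 2
        - 1 / (2 * α) * ‖d‖ ^ 2) = 2 * α ^ 2 * ‖ε‖ ^ 2 + 2 * α ^ 2 * ‖e‖ ^ 2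
        - α ^ 2 * ‖gθ‖ ^ 2 - ‖d‖ ^ 2 := by field_simp
    rw [← mul_le_mul_iff_right₀ h2α, hr]
    exact h4
  nlinarith [key, hinner]
end

section
/- Let L > 0, D ≥ 1, 0 < ρ₁ < 1, ρ₂ > 0, and ξ_1, …, ξ_D ≥ 0 with Σ_{d=1}^D ξ_d ≤ min{ (1-ρ₁)/(4(1+ρ₂)), 1/(2(1+ρ₂⁻¹)) }, and let α > 0 satisfy α ≤ min{ (2/L)·((1-ρ₁)/(4(1+ρ₂)) - Σ_{d=1}^D ξ_d), (2/L)·(1/(2(1+ρ₂⁻¹)) - Σ_{d=1}^D ξ_d) }. Set β_d = (1/α)·Σ_{j=d}^D ξ_j. Then the following three inequalities hold: (a) (-1/2 + ρ₁/2)α + (L + 2β₁)(1+ρ₂)α² ≤ 0; (b) [α/2 + (L/2 + β₁)(1+ρ₂⁻¹)α²]·ξ_d/α² + β_{d+1} - β_d ≤ 0 for each d = 1, …, D-1; (c) [α/2 + (L/2 + β₁)(1+ρ₂⁻¹)α²]·ξ_D/α² - β_D ≤ 0. -/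
/-- **Sufficiency of the parameter conditions (14) for the nonpositivity conditions (23).**
If `Σ ξ_d` and the stepsize `α` satisfy condition (14), then with
`β_d = (1/α)·Σ_{j=d}^D ξ_j` the three nonpositivity inequalities hold. -/
theorem parameter_conditions_sufficient (L : ℝ) (hL : 0 < L) (D : ℕ) (hD : 1 ≤ D)
    (ρ₁ ρ₂ : ℝ) (hρ₁ : 0 < ρ₁) (hρ₁' : ρ₁ < 1) (hρ₂ : 0 < ρ₂)
    (ξ : ℕ → ℝ) (hξ : ∀ d ∈ Finset.Icc 1 D, 0 ≤ ξ d)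
    (hξsum : ∑ d ∈ Finset.Icc 1 D, ξ d
      ≤ min ((1 - ρ₁) / (4 * (1 + ρ₂))) (1 / (2 * (1 + ρ₂⁻¹))))
    (α : ℝ) (hα : 0 < α)
    (hαle : α ≤ min
      ((2 / L) * ((1 - ρ₁) / (4 * (1 + ρ₂)) - ∑ d ∈ Finset.Icc 1 D, ξ d))
      ((2 / L) * (1 / (2 * (1 + ρ₂⁻¹)) - ∑ d ∈ Finset.Icc 1 D, ξ d)))
    (β : ℕ → ℝ) (hβ : ∀ d, β d = (1 / α) * ∑ j ∈ Finset.Icc d D, ξ j) :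
    ((-1 / 2 + ρ₁ / 2) * α + (L + 2 * β 1) * (1 + ρ₂) * α ^ 2 ≤ 0) ∧
    (∀ d ∈ Finset.Icc 1 (D - 1),
      (α / 2 + (L / 2 + β 1) * (1 + ρ₂⁻¹) * α ^ 2) * ξ d / α ^ 2 + β (d + 1) - β d ≤ 0) ∧
    ((α / 2 + (L / 2 + β 1) * (1 + ρ₂⁻¹) * α ^ 2) * ξ D / α ^ 2 - β D ≤ 0) := by
  set S := ∑ d ∈ Finset.Icc 1 D, ξ d with hSdef
  clear_value S
  obtain ⟨hξs1, hξs2⟩ := le_min_iff.mp hξsum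
  have hSpos : 0 ≤ S := hSdef ▸ Finset.sum_nonneg hξ
  have h2p : (0:ℝ) < 1 + ρ₂ := by linarith [hξs1, hξs2]
  have h3p : (0:ℝ) < 1 + ρ₂⁻¹ := by positivity
  have hα2 : (0:ℝ) < α ^ 2 := by positivity
  have h1 := (le_min_iff.mp hαle).1
  have h2 := (le_min_iff.mp hαle).2
  rw [show (2/L)*((1-ρ₁)/(4*(1+ρ₂)) - S) = 2*((1-ρ₁)/(4*(1+ρ₂)) - S)/L by ring,
    le_div_iff₀ hL] at h1
  rw [show (2/L)*(1/(2*(1+ρ₂⁻¹)) - S) = 2*(1/(2*(1+ρ₂⁻¹)) - S)/L by ring,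
    le_div_iff₀ hL] at h2
  -- h1 : α * L ≤ 2 * ((1-ρ₁)/(4*(1+ρ₂)) - S)
  have key1 : (α * L / 2 + S) * (4 * (1 + ρ₂)) ≤ 1 - ρ₁ := by
    have : α * L / 2 + S ≤ (1-ρ₁)/(4*(1+ρ₂)) := by linarith [hξs1, hξs2]
    calc (α * L / 2 + S) * (4 * (1 + ρ₂)) ≤ (1-ρ₁)/(4*(1+ρ₂)) * (4*(1+ρ₂)) :=
          mul_le_mul_of_nonneg_right this (by positivity)
      _ = 1 - ρ₁ := by field_simp
  have key2 : (α * L / 2 + S) * (2 * (1 + ρ₂⁻¹)) ≤ 1 := by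
    have : α * L / 2 + S ≤ 1/(2*(1+ρ₂⁻¹)) := by linarith [hξs1, hξs2]
    calc (α * L / 2 + S) * (2 * (1 + ρ₂⁻¹)) ≤ 1/(2*(1+ρ₂⁻¹)) * (2*(1+ρ₂⁻¹)) :=
          mul_le_mul_of_nonneg_right this (by positivity)
      _ = 1 := by field_simp
  have hβ1 : α * β 1 = S := by rw [hβ, ← hSdef]; field_simp
  have hsplit : ∀ d, 1 ≤ d → d ≤ D → α * β d = ξ d + α * β (d+1) := by
    intro d _ hdD
    rw [hβ, hβ, Finset.Icc_add_one_left_eq_Ioc, ← Finset.Ioc_insert_left hdD,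
      Finset.sum_insert Finset.left_notMem_Ioc]
    field_simp
  refine ⟨?_, ?_, ?_⟩
  · have hA : (L + 2 * β 1) * (1 + ρ₂) * α ^ 2 = (α * L + 2 * S) * (1 + ρ₂) * α := by
      linear_combination (2 * (1 + ρ₂) * α) * hβ1
    linarith [hA, mul_le_mul_of_nonneg_right key1 hα.le]
  · intro d hd
    simp only [Finset.mem_Icc] at hd
    have hdD : d ≤ D := by omega
    have hξd : 0 ≤ ξ d := hξ d (Finset.mem_Icc.mpr ⟨hd.1, hdD⟩)
    have hsp := hsplit d hd.1 hdD
    have heq : (α / 2 + (L / 2 + β 1) * (1 + ρ₂⁻¹) * α ^ 2) * ξ d / α ^ 2 + β (d + 1) - β d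
        = ((α / 2 + (L / 2 + β 1) * (1 + ρ₂⁻¹) * α ^ 2) * ξ d
            + (β (d+1) - β d) * α ^ 2) / α ^ 2 := by
      field_simp; ring
    rw [heq, div_le_iff₀ hα2, zero_mul]
    have hmid : (L / 2 + β 1) * (1 + ρ₂⁻¹) * α ^ 2 * ξ d
        = (α * L / 2 + S) * (1 + ρ₂⁻¹) * α * ξ d := by
      linear_combination ((1 + ρ₂⁻¹) * ξ d * α) * hβ1
    have hsp' : (β (d + 1) - β d) * α ^ 2 = -(ξ d * α) := by
      linear_combination (-α) * hsp
    have keyprod := mul_le_mul_of_nonneg_right key2 (mul_nonneg hα.le hξd)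
    linarith [hmid, hsp', keyprod]
  · have hξD : 0 ≤ ξ D := hξ D (Finset.mem_Icc.mpr ⟨hD, le_refl D⟩)
    have hβD : α * β D = ξ D := by
      rw [hβ, Finset.Icc_self, Finset.sum_singleton]; field_simp
    have heq : (α / 2 + (L / 2 + β 1) * (1 + ρ₂⁻¹) * α ^ 2) * ξ D / α ^ 2 - β D
        = ((α / 2 + (L / 2 + β 1) * (1 + ρ₂⁻¹) * α ^ 2) * ξ D - β D * α ^ 2) / α ^ 2 := by
      field_simp
    rw [heq, div_le_iff₀ hα2, zero_mul]
    have hmid : (L / 2 + β 1) * (1 + ρ₂⁻¹) * α ^ 2 * ξ D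
        = (α * L / 2 + S) * (1 + ρ₂⁻¹) * α * ξ D := by
      linear_combination ((1 + ρ₂⁻¹) * ξ D * α) * hβ1
    have hβD' : β D * α ^ 2 = ξ D * α := by linear_combination α * hβD
    have keyprod := mul_le_mul_of_nonneg_right key2 (mul_nonneg hα.le hξD)
    linarith [hmid, hβD', keyprod]
end

section
/- Let p, M, D ≥ 1 be integers, let f, f_1, …, f_M : ℝ^p → ℝ be differentiable with f = Σ_{m=1}^M f_m, assume ∇f is L-Lipschitz, f is μ-strongly convex (μ > 0) and attains its minimum at θ*. Let 0 < ρ₁ < 1, ρ₂ > 0, ξ_1, …, ξ_D ≥ 0 and α > 0 satisfy: Σ_{d=1}^D ξ_d ≤ min{ (1-ρ₁)/(4(1+ρ₂)), 1/(2(1+ρ₂⁻¹)) } and α ≤ min{ (2/L)·((1-ρ₁)/(4(1+ρ₂)) - Σξ_d), (2/L)·(1/(2(1+ρ₂⁻¹)) - Σξ_d) }. Set β_d = (1/α)·Σ_{j=d}^D ξ_j, define c = min{ μ(1-ρ₁)α - 2μ(L+2β₁)(1+ρ₂)α², 1 - [α/2 + (L/2+β₁)(1+ρ₂⁻¹)α²]·ξ_D/(α²β_D),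 min_{1≤d≤D-1}(1 - β_{d+1}/β_d - [α/2 + (L/2+β₁)(1+ρ₂⁻¹)α²]·ξ_d/(α²β_d)) }, σ₁ = 1 - c, and B = max{ α/(2ρ₁) + (L+2β₁)(1+ρ₂)α², [3α/2 + (3L/2+3β₁)(1+ρ₂⁻¹)α²]·M } (assume β_d > 0 for all d so c is well defined). Let θ^{k-D}, …, θ^{k+1} ∈ ℝ^p, S ⊆ {1,…,M}, ε_1, …, ε_M ∈ ℝ^p with ε = Σ_m ε_m, and for each m ∈ S vectors ε̂_m, δ_m with ‖δ_m‖₂² ≤ (1/(α²M²))·Σ_{d=1}^D ξ_d‖θ^{k+1-d} - θ^{k-d}‖₂² + 3(‖ε_m‖₂² + ‖ε̂_m‖₂²), and θ^{k+1} = θ^k - α(∇f(θ^k) - ε + Σ_{m∈S} δ_m). Define V_k = f(θ^k) - f(θ*) + Σ_{d=1}^D β_d‖θ^{k+1-d} - θ^{k-d}‖₂² and V_{k+1} analogously with indices shifted by one. Then V_{k+1} ≤ σ₁·V_k + B·[ ‖ε‖₂² + Σ_{m∈S}(‖ε_m‖₂² + ‖ε̂_m‖₂²) ]. -/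
open RealInnerProductSpace

lemma laq_young_ineq (a b ρ : ℝ) (hρ : 0 < ρ) : a * b ≤ ρ/2 * a^2 + 1/(2*ρ) * b^2 := by
  have h : ρ/2 * a^2 + 1/(2*ρ) * b^2 - a*b = (ρ*a - b)^2 / (2*ρ) := by
    field_simp; ring
  have h2 : (0:ℝ) ≤ (ρ*a - b)^2 / (2*ρ) := by positivity
  linarith

lemma laq_descent_lemma {p : ℕ} (f : EuclideanSpace ℝ (Fin p) → ℝ)
    (f' : EuclideanSpace ℝ (Fin p) → EuclideanSpace ℝ (Fin p))
    (hgrad : ∀ x, HasGradientAt f (f' x) x)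
    (L : ℝ) (hlip : ∀ x y, ‖f' x - f' y‖ ≤ L * ‖x - y‖)
    (x y : EuclideanSpace ℝ (Fin p)) :
    f y ≤ f x + ⟪f' x, y - x⟫ + L/2 * ‖y - x‖^2 := by
  set d := y - x with hd
  have hline : ∀ t : ℝ, HasDerivAt (fun s : ℝ => f (x + s • d)) ⟪f' (x + t • d), d⟫ t := by
    intro t
    have h1 : HasDerivAt (fun s : ℝ => x + s • d) d t := by
      simpa using ((hasDerivAt_id t).smul_const d).const_add x
    have h2 := (hgrad (x + t • d)).hasFDerivAt.comp_hasDerivAt t h1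
    exact h2
  set φ : ℝ → ℝ := fun t => f (x + t • d) - t * ⟪f' x, d⟫ - L * t^2/2 * ‖d‖^2 with hφdef
  have hφ : ∀ t : ℝ, HasDerivAt φ (⟪f' (x + t • d), d⟫ - ⟪f' x, d⟫ - L * t * ‖d‖^2) t := by
    intro t
    have h2 : HasDerivAt (fun s : ℝ => s * ⟪f' x, d⟫) ⟪f' x, d⟫ t := by
      simpa using (hasDerivAt_id t).mul_const ⟪f' x, d⟫
    have h3 : HasDerivAt (fun s : ℝ => L * s^2/2 * ‖d‖^2) (L * t * ‖d‖^2) t := by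
      have h4 := ((hasDerivAt_pow 2 t).const_mul (L/2)).mul_const (‖d‖^2)
      have h5 : (fun s : ℝ => L * s^2/2 * ‖d‖^2) = fun y => L/2 * y^2 * ‖d‖^2 := by
        funext s; ring
      rw [h5]
      exact h4.congr_deriv (by simp only [Nat.cast_ofNat, Nat.add_one_sub_one, pow_one]; ring)
    exact ((hline t).sub h2).sub h3
  have hdiff : Differentiable ℝ φ := fun t => (hφ t).differentiableAt
  have hanti : AntitoneOn φ (Set.Icc 0 1) := by
    apply antitoneOn_of_deriv_nonpos (convex_Icc (0:ℝ) 1) hdiff.continuous.continuousOn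
      (hdiff.differentiableOn)
    intro t ht
    rw [interior_Icc] at ht
    rw [(hφ t).deriv]
    have h5 : ⟪f' (x + t • d), d⟫ - ⟪f' x, d⟫ = ⟪f' (x + t • d) - f' x, d⟫ := by
      rw [inner_sub_left]
    have h6 : ⟪f' (x + t • d) - f' x, d⟫ ≤ ‖f' (x + t • d) - f' x‖ * ‖d‖ :=
      real_inner_le_norm _ _
    have h7 : ‖f' (x + t • d) - f' x‖ ≤ L * ‖(x + t • d) - x‖ := hlip _ _
    have h8 : ‖(x + t • d) - x‖ = t * ‖d‖ := by
      rw [add_sub_cancel_left, norm_smul, Real.norm_eq_abs, abs_of_pos ht.1]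
    have h9 : (0:ℝ) ≤ ‖d‖ := norm_nonneg _
    rw [h5]
    rw [h8] at h7
    have h10 := mul_le_mul_of_nonneg_right h7 h9
    nlinarith [h6, h10]
  have h10 : φ 1 ≤ φ 0 := hanti (Set.mem_Icc.mpr ⟨le_refl 0, zero_le_one⟩)
    (Set.mem_Icc.mpr ⟨zero_le_one, le_refl 1⟩) zero_le_one
  have h11 : φ 0 = f x := by simp [hφdef]
  have h12 : φ 1 = f y - ⟪f' x, d⟫ - L/2 * ‖d‖^2 := by
    have : x + (1:ℝ) • d = y := by rw [one_smul, hd]; abel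
    simp only [hφdef, this, one_mul, one_pow]
    ring
  rw [h11, h12] at h10
  linarith

set_option maxHeartbeats 2000000

/-- **Lemma 3 of the paper (with the explicit constants `σ₁` and `B` from its proof).**
Under the parameter conditions (14), the Lyapunov function of LAQ satisfies
`V_{k+1} ≤ σ₁·V_k + B·[‖ε‖² + Σ_{m∈S}(‖ε_m‖² + ‖ε̂_m‖²)]`.
Here `c` is the minimum listed in the proof: the entry of the inner minimum at `d = D`
coincides with the second entry of the paper's `min`, since `β_{D+1} = 0` by the defining
formula of `β`. -/
theorem laq_lyapunov_contraction (p M D : ℕ) (hp : 1 ≤ p) (hM : 1 ≤ M) (hD : 1 ≤ D)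
    (f : EuclideanSpace ℝ (Fin p) → ℝ)
    (fm : Fin M → EuclideanSpace ℝ (Fin p) → ℝ)
    (hfm : ∀ m, Differentiable ℝ (fm m))
    (hsum : ∀ x, f x = ∑ m, fm m x)
    (f' : EuclideanSpace ℝ (Fin p) → EuclideanSpace ℝ (Fin p))
    (hgrad : ∀ x, HasGradientAt f (f' x) x)
    (L : ℝ) (hlip : ∀ x y, ‖f' x - f' y‖ ≤ L * ‖x - y‖)
    (μ : ℝ) (hμ : 0 < μ)
    (hsc : ∀ x y, ⟪f' y, x - y⟫ + μ / 2 * ‖x - y‖ ^ 2 ≤ f x - f y)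
    (θstar : EuclideanSpace ℝ (Fin p)) (hmin : ∀ x, f θstar ≤ f x)
    (ρ₁ ρ₂ : ℝ) (hρ₁ : 0 < ρ₁) (hρ₁' : ρ₁ < 1) (hρ₂ : 0 < ρ₂)
    (ξ : ℕ → ℝ) (hξ : ∀ d ∈ Finset.Icc 1 D, 0 ≤ ξ d)
    (hξsum : ∑ d ∈ Finset.Icc 1 D, ξ d
      ≤ min ((1 - ρ₁) / (4 * (1 + ρ₂))) (1 / (2 * (1 + ρ₂⁻¹))))
    (α : ℝ) (hα : 0 < α)
    (hαle : α ≤ min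
      ((2 / L) * ((1 - ρ₁) / (4 * (1 + ρ₂)) - ∑ d ∈ Finset.Icc 1 D, ξ d))
      ((2 / L) * (1 / (2 * (1 + ρ₂⁻¹)) - ∑ d ∈ Finset.Icc 1 D, ξ d)))
    (β : ℕ → ℝ) (hβ : ∀ d, β d = (1 / α) * ∑ j ∈ Finset.Icc d D, ξ j)
    (hβpos : ∀ d ∈ Finset.Icc 1 D, 0 < β d)
    (c σ₁ B : ℝ)
    (hc : c = min (μ * (1 - ρ₁) * α - 2 * μ * (L + 2 * β 1) * (1 + ρ₂) * α ^ 2)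
      ((Finset.Icc 1 D).inf' (Finset.nonempty_Icc.mpr hD) fun d =>
        1 - β (d + 1) / β d
          - (α / 2 + (L / 2 + β 1) * (1 + ρ₂⁻¹) * α ^ 2) * ξ d / (α ^ 2 * β d)))
    (hσ₁ : σ₁ = 1 - c)
    (hB : B = max (α / (2 * ρ₁) + (L + 2 * β 1) * (1 + ρ₂) * α ^ 2)
      ((3 * α / 2 + (3 * L / 2 + 3 * β 1) * (1 + ρ₂⁻¹) * α ^ 2) * M))
    (θ : ℤ → EuclideanSpace ℝ (Fin p)) (k : ℤ)
    (S : Finset (Fin M))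
    (ε : Fin M → EuclideanSpace ℝ (Fin p))
    (εsum : EuclideanSpace ℝ (Fin p)) (hεsum : εsum = ∑ m, ε m)
    (εh δ : Fin M → EuclideanSpace ℝ (Fin p))
    (hcrit : ∀ m ∈ S, ‖δ m‖ ^ 2 ≤
      (1 / (α ^ 2 * M ^ 2)) * ∑ d ∈ Finset.Icc 1 D, ξ d * ‖θ (k + 1 - d) - θ (k - d)‖ ^ 2
      + 3 * (‖ε m‖ ^ 2 + ‖εh m‖ ^ 2))
    (hupd : θ (k + 1) = θ k - α • (f' (θ k) - εsum + ∑ m ∈ S, δ m))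
    (Vk Vk1 : ℝ)
    (hVk : Vk = f (θ k) - f θstar
      + ∑ d ∈ Finset.Icc 1 D, β d * ‖θ (k + 1 - d) - θ (k - d)‖ ^ 2)
    (hVk1 : Vk1 = f (θ (k + 1)) - f θstar
      + ∑ d ∈ Finset.Icc 1 D, β d * ‖θ (k + 2 - d) - θ (k + 1 - d)‖ ^ 2) :
    Vk1 ≤ σ₁ * Vk + B * (‖εsum‖ ^ 2 + ∑ m ∈ S, (‖ε m‖ ^ 2 + ‖εh m‖ ^ 2)) := by
  have hαne : α ≠ 0 := ne_of_gt hα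
  have hMpos : (0:ℝ) < M := by exact_mod_cast Nat.lt_of_lt_of_le Nat.zero_lt_one hM
  have hMne : (M:ℝ) ≠ 0 := ne_of_gt hMpos
  have hD1 : 1 ∈ Finset.Icc 1 D := Finset.mem_Icc.mpr ⟨le_refl 1, hD⟩
  have hβ1pos : 0 < β 1 := hβpos 1 hD1
  -- μ ≤ L, hence L > 0
  have hμL : μ ≤ L := by
    obtain ⟨u, hu⟩ : ∃ u : EuclideanSpace ℝ (Fin p), ‖u‖ = 1 :=
      ⟨EuclideanSpace.single ⟨0, hp⟩ 1, by simp⟩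
    have h1 := hsc (θstar + u) θstar
    have h2 := hsc θstar (θstar + u)
    have e1 : θstar + u - θstar = u := add_sub_cancel_left θstar u
    have e2 : θstar - (θstar + u) = -u := by
      rw [sub_add_eq_sub_sub, sub_self, zero_sub]
    rw [e1] at h1
    rw [e2] at h2
    have h3 : μ ≤ ⟪f' (θstar + u) - f' θstar, u⟫ := by
      rw [inner_sub_left]
      rw [inner_neg_right] at h2
      simp only [norm_neg, hu, one_pow, mul_one] at h1 h2
      linarith only [h1, h2]
    have h4 : ⟪f' (θstar + u) - f' θstar, u⟫ ≤ ‖f' (θstar + u) - f' θstar‖ * ‖u‖ :=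
      real_inner_le_norm _ _
    have h5 := hlip (θstar + u) θstar
    rw [e1] at h5
    rw [hu] at h4 h5
    linarith only [h3, h4, h5, hμ]
  have hL : 0 < L := lt_of_lt_of_le hμ hμL
  -- PL inequality
  have hPL : 2*μ*(f (θ k) - f θstar) ≤ ‖f' (θ k)‖^2 := by
    have h1 := hsc θstar (θ k)
    have h2 : -(‖f' (θ k)‖ * ‖θstar - θ k‖) ≤ ⟪f' (θ k), θstar - θ k⟫ := by
      have h3 := abs_real_inner_le_norm (f' (θ k)) (θstar - θ k)
      have h4 := neg_abs_le ⟪f' (θ k), θstar - θ k⟫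
      linarith only [h3, h4]
    nlinarith only [sq_nonneg (μ * ‖θstar - θ k‖ - ‖f' (θ k)‖), hμ, h1, h2]
  -- the stepsize condition
  have hβ1eq : α * β 1 = ∑ d ∈ Finset.Icc 1 D, ξ d := by
    rw [hβ 1]; field_simp
  have hcoefN : (L + 2*β 1)*(1+ρ₂)*α^2 ≤ (1-ρ₁)*α/2 := by
    have hq : α ≤ (2 / L) * ((1 - ρ₁) / (4 * (1 + ρ₂)) - ∑ d ∈ Finset.Icc 1 D, ξ d) :=
      le_trans hαle (min_le_left _ _)
    have hLα : L*α/2 + ∑ d ∈ Finset.Icc 1 D, ξ d ≤ (1-ρ₁)/(4*(1+ρ₂)) := by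
      have h1 := mul_le_mul_of_nonneg_left hq (show (0:ℝ) ≤ L/2 by positivity)
      have h2 : L/2 * ((2 / L) * ((1 - ρ₁) / (4 * (1 + ρ₂)) - ∑ d ∈ Finset.Icc 1 D, ξ d))
          = (1 - ρ₁) / (4 * (1 + ρ₂)) - ∑ d ∈ Finset.Icc 1 D, ξ d := by
        field_simp
      rw [h2] at h1
      linarith only [h1]
    rw [← hβ1eq] at hLα
    have key := mul_le_mul_of_nonneg_right hLα (show (0:ℝ) ≤ 2*(1+ρ₂)*α by positivity)
    have e : ((1-ρ₁)/(4*(1+ρ₂))) * (2*(1+ρ₂)*α) = (1-ρ₁)*α/2 := by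
      field_simp; ring
    have e2 : (L + 2*β 1)*(1+ρ₂)*α^2 = (L*α/2 + α*β 1)*(2*(1+ρ₂)*α) := by ring
    linarith only [key, e, e2]
  -- vector-level step facts
  set Δ : EuclideanSpace ℝ (Fin p) := ∑ m ∈ S, δ m with hΔ
  set v : EuclideanSpace ℝ (Fin p) := f' (θ k) - εsum + Δ with hv
  have hstep : θ (k+1) - θ k = -(α • v) := by rw [hupd, sub_sub_cancel_left]
  have hnorm2 : ‖θ (k+1) - θ k‖^2 = α^2 * ‖v‖^2 := by
    rw [hstep, norm_neg, norm_smul, Real.norm_eq_abs, abs_of_pos hα, mul_pow]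
  have hdes := laq_descent_lemma f f' hgrad L hlip (θ k) (θ (k+1))
  have hinner : ⟪f' (θ k), θ (k+1) - θ k⟫
      = -(α * (‖f' (θ k)‖^2 - ⟪f' (θ k), εsum⟫ + ⟪f' (θ k), Δ⟫)) := by
    rw [hstep, inner_neg_right, real_inner_smul_right, hv, inner_add_right, inner_sub_right,
      real_inner_self_eq_norm_sq]
  -- Young inequalities
  have h3 : ⟪f' (θ k), εsum⟫ ≤ ρ₁/2 * ‖f' (θ k)‖^2 + 1/(2*ρ₁) * ‖εsum‖^2 :=
    le_trans (real_inner_le_norm _ _) (laq_young_ineq _ _ ρ₁ hρ₁)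
  have h4 : -⟪f' (θ k), Δ⟫ ≤ 1/2 * ‖f' (θ k)‖^2 + 1/2 * ‖Δ‖^2 := by
    have ha := abs_real_inner_le_norm (f' (θ k)) Δ
    have hy := laq_young_ineq ‖f' (θ k)‖ ‖Δ‖ 1 one_pos
    have hn := neg_abs_le ⟪f' (θ k), Δ⟫
    linarith only [ha, hy, hn]
  have hV2 : ‖v‖^2 ≤ (1+ρ₂)*(2*‖f' (θ k)‖^2 + 2*‖εsum‖^2) + (1+ρ₂⁻¹)*‖Δ‖^2 := by
    have hv2 : ‖v‖^2 = ‖(f' (θ k) - εsum) + Δ‖^2 := by rw [hv]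
    have hns := norm_add_sq_real (f' (θ k) - εsum) Δ
    have hy := laq_young_ineq ‖f' (θ k) - εsum‖ ‖Δ‖ ρ₂ hρ₂
    have hi := real_inner_le_norm (f' (θ k) - εsum) Δ
    have h6 : ‖f' (θ k) - εsum‖^2 ≤ 2*‖f' (θ k)‖^2 + 2*‖εsum‖^2 := by
      have hns2 := norm_sub_sq_real (f' (θ k)) εsum
      have hi2 := abs_real_inner_le_norm (f' (θ k)) εsum
      nlinarith only [sq_nonneg (‖f' (θ k)‖ - ‖εsum‖), hns2, hi2, neg_abs_le ⟪f' (θ k), εsum⟫]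
    have h7 : (0:ℝ) ≤ 1 + ρ₂ := by positivity
    have h8 := mul_le_mul_of_nonneg_left h6 h7
    have gl2 : 2*(1/(2*ρ₂) * ‖Δ‖^2) = ρ₂⁻¹ * ‖Δ‖^2 := by
      ring
    rw [hv2, hns]
    linarith only [h8, hy, hi, gl2]
  -- the Δ bound
  have hW0 : (0:ℝ) ≤ ∑ d ∈ Finset.Icc 1 D, ξ d * ‖θ (k + 1 - (d:ℤ)) - θ (k - (d:ℤ))‖ ^ 2 :=
    Finset.sum_nonneg fun d hd => mul_nonneg (hξ d hd) (sq_nonneg _)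
  have hP0 : (0:ℝ) ≤ ∑ m ∈ S, (‖ε m‖ ^ 2 + ‖εh m‖ ^ 2) :=
    Finset.sum_nonneg fun m _ => by positivity
  have hTbound : ‖Δ‖^2 ≤
      1/α^2 * (∑ d ∈ Finset.Icc 1 D, ξ d * ‖θ (k + 1 - (d:ℤ)) - θ (k - (d:ℤ))‖ ^ 2)
      + 3*(M:ℝ)*(∑ m ∈ S, (‖ε m‖ ^ 2 + ‖εh m‖ ^ 2)) := by
    have hT1 : ‖Δ‖ ≤ ∑ m ∈ S, ‖δ m‖ := norm_sum_le S δ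
    have hT2 : ‖Δ‖^2 ≤ (S.card:ℝ) * ∑ m ∈ S, ‖δ m‖^2 := by
      calc ‖Δ‖^2 ≤ (∑ m ∈ S, ‖δ m‖)^2 := by
            apply pow_le_pow_left₀ (norm_nonneg _) hT1
        _ ≤ (S.card:ℝ) * ∑ m ∈ S, ‖δ m‖^2 := by
            exact_mod_cast sq_sum_le_card_mul_sum_sq (s := S) (f := fun m => ‖δ m‖)
    have hT3 : ∑ m ∈ S, ‖δ m‖^2 ≤ (S.card:ℝ) *
        ((1 / (α ^ 2 * M ^ 2)) * ∑ d ∈ Finset.Icc 1 D, ξ d * ‖θ (k + 1 - (d:ℤ)) - θ (k - (d:ℤ))‖ ^ 2)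
        + 3 * ∑ m ∈ S, (‖ε m‖ ^ 2 + ‖εh m‖ ^ 2) := by
      calc ∑ m ∈ S, ‖δ m‖^2
          ≤ ∑ m ∈ S, ((1 / (α ^ 2 * M ^ 2)) *
              (∑ d ∈ Finset.Icc 1 D, ξ d * ‖θ (k + 1 - (d:ℤ)) - θ (k - (d:ℤ))‖ ^ 2)
              + 3 * (‖ε m‖ ^ 2 + ‖εh m‖ ^ 2)) := Finset.sum_le_sum hcrit
        _ = _ := by
            rw [Finset.sum_add_distrib, Finset.sum_const, nsmul_eq_mul, ← Finset.mul_sum]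
    have hcard : (S.card : ℝ) ≤ M := by
      have := Finset.card_le_univ S
      simp only [Finset.card_univ, Fintype.card_fin] at this
      exact_mod_cast this
    have hcs0 : (0:ℝ) ≤ S.card := Nat.cast_nonneg _
    have hw0 : (0:ℝ) ≤ (1 / (α ^ 2 * M ^ 2)) *
        ∑ d ∈ Finset.Icc 1 D, ξ d * ‖θ (k + 1 - (d:ℤ)) - θ (k - (d:ℤ))‖ ^ 2 := by positivity
    have s1 := mul_le_mul_of_nonneg_left hT3 hcs0
    have s2 : (S.card:ℝ) * ((S.card:ℝ) *
        ((1 / (α ^ 2 * M ^ 2)) * ∑ d ∈ Finset.Icc 1 D, ξ d * ‖θ (k + 1 - (d:ℤ)) - θ (k - (d:ℤ))‖ ^ 2)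
        + 3 * ∑ m ∈ S, (‖ε m‖ ^ 2 + ‖εh m‖ ^ 2))
        ≤ (M:ℝ) * ((M:ℝ) *
        ((1 / (α ^ 2 * M ^ 2)) * ∑ d ∈ Finset.Icc 1 D, ξ d * ‖θ (k + 1 - (d:ℤ)) - θ (k - (d:ℤ))‖ ^ 2)
        + 3 * ∑ m ∈ S, (‖ε m‖ ^ 2 + ‖εh m‖ ^ 2)) := by
      have hsq : (S.card:ℝ) * (S.card:ℝ) ≤ (M:ℝ) * (M:ℝ) :=
        mul_le_mul hcard hcard hcs0 (le_trans hcs0 hcard)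
      nlinarith only [mul_le_mul_of_nonneg_right hsq hw0, mul_le_mul_of_nonneg_right hcard hP0]
    have e : (M:ℝ) * ((M:ℝ) *
        ((1 / (α ^ 2 * M ^ 2)) * ∑ d ∈ Finset.Icc 1 D, ξ d * ‖θ (k + 1 - (d:ℤ)) - θ (k - (d:ℤ))‖ ^ 2)
        + 3 * ∑ m ∈ S, (‖ε m‖ ^ 2 + ‖εh m‖ ^ 2))
        = 1/α^2 * (∑ d ∈ Finset.Icc 1 D, ξ d * ‖θ (k + 1 - (d:ℤ)) - θ (k - (d:ℤ))‖ ^ 2)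
        + 3*(M:ℝ)*(∑ m ∈ S, (‖ε m‖ ^ 2 + ‖εh m‖ ^ 2)) := by
      field_simp
    linarith only [hT2, s1, s2, e]
  -- shift the Lyapunov sum
  have hβD1 : β (D+1) = 0 := by
    rw [hβ (D+1), Finset.Icc_eq_empty (by omega), Finset.sum_empty, mul_zero]
  have hIcc : ∀ (F : ℕ → ℝ), ∑ d ∈ Finset.Icc 1 D, F d = ∑ i ∈ Finset.range D, F (i+1) := by
    intro F
    rw [← Finset.Ico_add_one_right_eq_Icc, Finset.sum_Ico_eq_sum_range]
    simp [add_comm]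
  have hshift : ∑ d ∈ Finset.Icc 1 D, β d * ‖θ (k + 2 - (d:ℤ)) - θ (k + 1 - (d:ℤ))‖^2
      = β 1 * ‖θ (k+1) - θ k‖^2
        + ∑ d ∈ Finset.Icc 1 D, β (d+1) * ‖θ (k + 1 - (d:ℤ)) - θ (k - (d:ℤ))‖^2 := by
    set G : ℕ → ℝ := fun i => β (i+1) * ‖θ (k + 1 - (i:ℤ)) - θ (k - (i:ℤ))‖^2 with hG
    have e1 : ∑ d ∈ Finset.Icc 1 D, β d * ‖θ (k + 2 - (d:ℤ)) - θ (k + 1 - (d:ℤ))‖^2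
        = ∑ i ∈ Finset.range D, G i := by
      rw [hIcc]
      apply Finset.sum_congr rfl
      intro i _
      have c1 : (k + 2 - ((i+1 : ℕ):ℤ)) = k + 1 - (i:ℤ) := by push_cast; ring
      have c2 : (k + 1 - ((i+1 : ℕ):ℤ)) = k - (i:ℤ) := by push_cast; ring
      rw [c1, c2]
    have e2 : ∑ d ∈ Finset.Icc 1 D, β (d+1) * ‖θ (k + 1 - (d:ℤ)) - θ (k - (d:ℤ))‖^2
        = ∑ i ∈ Finset.range D, G (i+1) := by
      rw [hIcc]
    have e3 : ∑ i ∈ Finset.range (D+1), G i = (∑ i ∈ Finset.range D, G (i+1)) + G 0 :=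
      Finset.sum_range_succ' G D
    have e4 : ∑ i ∈ Finset.range (D+1), G i = (∑ i ∈ Finset.range D, G i) + G D :=
      Finset.sum_range_succ G D
    have e5 : G D = 0 := by
      rw [hG]; simp only [hβD1, zero_mul]
    have e6 : G 0 = β 1 * ‖θ (k+1) - θ k‖^2 := by
      rw [hG]; norm_num
    rw [e1, e2]
    rw [e5] at e4
    rw [e6] at e3
    linarith only [e3, e4]
  -- per-d coefficient inequality
  have hcd : ∀ d ∈ Finset.Icc 1 D,
      β (d+1) + (α/2 + (L/2 + β 1)*(1+ρ₂⁻¹)*α^2) * ξ d / α^2 ≤ (1-c)*β d := by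
    intro d hd
    have hb := hβpos d hd
    have hcle : c ≤ 1 - β (d + 1) / β d
        - (α / 2 + (L / 2 + β 1) * (1 + ρ₂⁻¹) * α ^ 2) * ξ d / (α ^ 2 * β d) := by
      rw [hc]
      exact le_trans (min_le_right _ _) (Finset.inf'_le _ hd)
    have key := mul_le_mul_of_nonneg_right
      (show β (d+1)/β d + (α/2 + (L/2 + β 1)*(1+ρ₂⁻¹)*α^2) * ξ d / (α^2 * β d) ≤ 1 - c by
        linarith only [hcle]) hb.le
    have e : (β (d+1)/β d + (α/2 + (L/2 + β 1)*(1+ρ₂⁻¹)*α^2) * ξ d / (α^2 * β d)) * β d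
        = β (d+1) + (α/2 + (L/2 + β 1)*(1+ρ₂⁻¹)*α^2) * ξ d / α^2 := by
      field_simp
    linarith only [key, e]
  -- summed d-inequality
  have hXnn : ∀ d : ℕ, (0:ℝ) ≤ ‖θ (k + 1 - (d:ℤ)) - θ (k - (d:ℤ))‖^2 := fun d => sq_nonneg _
  have hdsum : (∑ d ∈ Finset.Icc 1 D, β (d+1) * ‖θ (k + 1 - (d:ℤ)) - θ (k - (d:ℤ))‖^2)
      + (α/2 + (L/2 + β 1)*(1+ρ₂⁻¹)*α^2)/α^2
        * (∑ d ∈ Finset.Icc 1 D, ξ d * ‖θ (k + 1 - (d:ℤ)) - θ (k - (d:ℤ))‖ ^ 2)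
      ≤ (1-c) * ∑ d ∈ Finset.Icc 1 D, β d * ‖θ (k + 1 - (d:ℤ)) - θ (k - (d:ℤ))‖ ^ 2 := by
    have h := Finset.sum_le_sum (f := fun d =>
        (β (d+1) + (α/2 + (L/2 + β 1)*(1+ρ₂⁻¹)*α^2) * ξ d / α^2)
          * ‖θ (k + 1 - (d:ℤ)) - θ (k - (d:ℤ))‖^2)
      (g := fun d => ((1-c)*β d) * ‖θ (k + 1 - (d:ℤ)) - θ (k - (d:ℤ))‖^2)
      (fun d hd => mul_le_mul_of_nonneg_right (hcd d hd) (hXnn d))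
    have eL : ∑ d ∈ Finset.Icc 1 D,
        (β (d+1) + (α/2 + (L/2 + β 1)*(1+ρ₂⁻¹)*α^2) * ξ d / α^2)
          * ‖θ (k + 1 - (d:ℤ)) - θ (k - (d:ℤ))‖^2
        = (∑ d ∈ Finset.Icc 1 D, β (d+1) * ‖θ (k + 1 - (d:ℤ)) - θ (k - (d:ℤ))‖^2)
        + (α/2 + (L/2 + β 1)*(1+ρ₂⁻¹)*α^2)/α^2
          * (∑ d ∈ Finset.Icc 1 D, ξ d * ‖θ (k + 1 - (d:ℤ)) - θ (k - (d:ℤ))‖ ^ 2) := by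
      rw [Finset.mul_sum, ← Finset.sum_add_distrib]
      apply Finset.sum_congr rfl
      intro d _
      ring
    have eR : ∑ d ∈ Finset.Icc 1 D,
        ((1-c)*β d) * ‖θ (k + 1 - (d:ℤ)) - θ (k - (d:ℤ))‖^2
        = (1-c) * ∑ d ∈ Finset.Icc 1 D, β d * ‖θ (k + 1 - (d:ℤ)) - θ (k - (d:ℤ))‖ ^ 2 := by
      rw [Finset.mul_sum]
      apply Finset.sum_congr rfl
      intro d _
      ring
    rw [eL, eR] at h
    exact h
  -- assemble
  have hVk1' : Vk1 = f (θ (k+1)) - f θstar + β 1 * (α^2 * ‖v‖^2)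
      + ∑ d ∈ Finset.Icc 1 D, β (d+1) * ‖θ (k + 1 - (d:ℤ)) - θ (k - (d:ℤ))‖^2 := by
    rw [hVk1, hshift, hnorm2]
    ring
  have fineq : f (θ (k+1)) ≤ f (θ k) - α*(1-ρ₁)/2 * ‖f' (θ k)‖^2
      + α/(2*ρ₁) * ‖εsum‖^2 + α/2 * ‖Δ‖^2 + L/2 * (α^2 * ‖v‖^2) := by
    have m3 := mul_le_mul_of_nonneg_left h3 hα.le
    have m4 := mul_le_mul_of_nonneg_left h4 hα.le
    rw [hinner, hnorm2] at hdes
    have gl3 : α*(ρ₁/2*‖f' (θ k)‖^2 + 1/(2*ρ₁)*‖εsum‖^2)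
        = α*ρ₁/2*‖f' (θ k)‖^2 + α/(2*ρ₁)*‖εsum‖^2 := by ring
    linarith only [hdes, m3, m4, gl3]
  have hv2m : (L/2 + β 1) * (α^2 * ‖v‖^2)
      ≤ (L/2 + β 1)*α^2 * ((1+ρ₂)*(2*‖f' (θ k)‖^2 + 2*‖εsum‖^2) + (1+ρ₂⁻¹)*‖Δ‖^2) := by
    have hpos : (0:ℝ) ≤ (L/2 + β 1)*α^2 := by positivity
    have := mul_le_mul_of_nonneg_left hV2 hpos
    linarith only [this]
  have hA0 : (0:ℝ) ≤ α/2 + (L/2 + β 1)*(1+ρ₂⁻¹)*α^2 := by positivity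
  have hTm := mul_le_mul_of_nonneg_left hTbound hA0
  have hCN : (L + 2*β 1)*(1+ρ₂)*α^2 - α*(1-ρ₁)/2 ≤ 0 := by linarith only [hcoefN]
  have hNm := mul_le_mul_of_nonpos_left hPL hCN
  have hc1 : c ≤ μ * (1 - ρ₁) * α - 2 * μ * (L + 2 * β 1) * (1 + ρ₂) * α ^ 2 := by
    rw [hc]; exact min_le_left _ _
  have hF0 : 0 ≤ f (θ k) - f θstar := by linarith only [hmin (θ k)]
  have hcF := mul_le_mul_of_nonneg_right hc1 hF0
  have hE0 : (0:ℝ) ≤ ‖εsum‖^2 := sq_nonneg _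
  have hBE : α / (2 * ρ₁) + (L + 2 * β 1) * (1 + ρ₂) * α ^ 2 ≤ B := by
    rw [hB]; exact le_max_left _ _
  have hBP : (3 * α / 2 + (3 * L / 2 + 3 * β 1) * (1 + ρ₂⁻¹) * α ^ 2) * M ≤ B := by
    rw [hB]; exact le_max_right _ _
  have hBE' := mul_le_mul_of_nonneg_right hBE hE0
  have hBP' := mul_le_mul_of_nonneg_right hBP hP0
  have hσVk : σ₁ * Vk = (1-c) * (f (θ k) - f θstar)
      + (1-c) * ∑ d ∈ Finset.Icc 1 D, β d * ‖θ (k + 1 - (d:ℤ)) - θ (k - (d:ℤ))‖ ^ 2 := by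
    rw [hσ₁, hVk]; ring
  have gd : (α/2 + (L/2 + β 1)*(1+ρ₂⁻¹)*α^2)/α^2
        * (∑ d ∈ Finset.Icc 1 D, ξ d * ‖θ (k + 1 - (d:ℤ)) - θ (k - (d:ℤ))‖ ^ 2)
      = (α/2 + (L/2 + β 1)*(1+ρ₂⁻¹)*α^2)
        * (1/α^2 * (∑ d ∈ Finset.Icc 1 D, ξ d * ‖θ (k + 1 - (d:ℤ)) - θ (k - (d:ℤ))‖ ^ 2)) := by
    ring
  linarith only [hVk1', fineq, hv2m, hTm, hdsum, hNm, hcF, hσVk, hBE', hBP', gd]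
end

section
/- Let p, M, D ≥ 1 be integers and let f, f_1, …, f_M : ℝ^p → ℝ be differentiable with f = Σ_{m=1}^M f_m, f μ-strongly convex (μ > 0) with minimizer θ*. Fix m and assume ‖∇f_m(θ₁) - ∇f_m(θ₂)‖_∞ ≤ L'·‖θ₁ - θ₂‖_∞ for all θ₁, θ₂, with L' > 0. Let α > 0 and ξ_1, …, ξ_D ≥ 0, let θ^{k-D}, …, θ^k, θ^{k+1} ∈ ℝ^p, let θ̂ ∈ ℝ^p, and let Q_m(θ^k), Q_m(θ̂) ∈ ℝ^p with errors ε_m^k = ∇f_m(θ^k) - Q_m(θ^k) and ε̂_m = ∇f_m(θ̂) - Q_m(θ̂). Suppose ‖Q_m(θ^k) - Q_m(θ̂)‖₂² ≤ (1/(α²M²))·Σ_{d=1}^D ξ_d‖θ^{k+1-d} - θ^{k-d}‖₂² + 3(‖ε_m^k‖₂² + ‖ε̂_m‖₂²). Then ‖∇f_m(θ^{k+1}) - Q_m(θ̂)‖_∞² ≤ (12L'²/μ)·[ f(θ^{k+1}) - f(θ*) + f(θ^k) - f(θ*) + (μ/(4L'²α²M²))·Σ_{d=1}^D ξ_d‖θ^{k+1-d}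 - θ^{k-d}‖₂² ] + (9p+3)·‖ε_m^k‖_∞² + 9p·‖ε̂_m‖_∞². -/
open RealInnerProductSpace

/-- The ℓ∞ norm on `ℝ^p`: `‖x‖_∞ = max_i |x_i|`. -/
noncomputable def linf {p : ℕ} (x : EuclideanSpace ℝ (Fin p)) : ℝ :=
  ‖(WithLp.equiv 2 (Fin p → ℝ)) x‖

lemma linf_nonneg {p : ℕ} (x : EuclideanSpace ℝ (Fin p)) : 0 ≤ linf x := norm_nonneg _

lemma coord_le_norm {p : ℕ} (x : EuclideanSpace ℝ (Fin p)) (i : Fin p) : ‖x i‖ ≤ ‖x‖ := by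
  rw [EuclideanSpace.norm_eq]
  have h1 : ‖x i‖ ^ 2 ≤ ∑ j, ‖x j‖ ^ 2 :=
    Finset.single_le_sum (f := fun j => ‖x j‖ ^ 2) (fun j _ => by positivity) (Finset.mem_univ i)
  calc ‖x i‖ = Real.sqrt (‖x i‖ ^ 2) := by rw [Real.sqrt_sq (norm_nonneg _)]
    _ ≤ Real.sqrt (∑ j, ‖x j‖ ^ 2) := Real.sqrt_le_sqrt h1

lemma linf_le_norm {p : ℕ} (x : EuclideanSpace ℝ (Fin p)) : linf x ≤ ‖x‖ := by
  rw [linf, pi_norm_le_iff_of_nonneg (norm_nonneg x)]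
  intro i
  exact coord_le_norm x i

lemma coord_le_linf {p : ℕ} (x : EuclideanSpace ℝ (Fin p)) (i : Fin p) : ‖x i‖ ≤ linf x :=
  norm_le_pi_norm ((WithLp.equiv 2 (Fin p → ℝ)) x) i

lemma norm_sq_le_linf {p : ℕ} (x : EuclideanSpace ℝ (Fin p)) : ‖x‖ ^ 2 ≤ p * linf x ^ 2 := by
  have h : ∀ i, ‖x i‖ ^ 2 ≤ linf x ^ 2 := fun i =>
    pow_le_pow_left₀ (norm_nonneg _) (coord_le_linf x i) 2
  calc ‖x‖ ^ 2 = ∑ i, ‖x i‖ ^ 2 := by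
        rw [EuclideanSpace.norm_eq, Real.sq_sqrt (by positivity)]
    _ ≤ ∑ _i : Fin p, linf x ^ 2 := Finset.sum_le_sum fun i _ => h i
    _ = p * linf x ^ 2 := by simp [Finset.sum_const, nsmul_eq_mul]

lemma linf_triangle3 {p : ℕ} (a b c : EuclideanSpace ℝ (Fin p)) :
    linf (a + b + c) ≤ linf a + linf b + linf c := by
  simp only [linf, WithLp.equiv_apply, WithLp.ofLp_add]
  exact (norm_add_le _ _).trans (add_le_add_left (norm_add_le _ _) _)

set_option maxHeartbeats 1000000 in
/-- **Chain inequality (30) in the supplementary proof of Theorem 1**, bounding the next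
quantization radius of worker `m`. -/
theorem quantization_radius_bound (p M D : ℕ) (hp : 1 ≤ p) (hM : 1 ≤ M) (hD : 1 ≤ D)
    (f : EuclideanSpace ℝ (Fin p) → ℝ)
    (fm : Fin M → EuclideanSpace ℝ (Fin p) → ℝ)
    (f' : EuclideanSpace ℝ (Fin p) → EuclideanSpace ℝ (Fin p))
    (fm' : Fin M → EuclideanSpace ℝ (Fin p) → EuclideanSpace ℝ (Fin p))
    (hgrad : ∀ x, HasGradientAt f (f' x) x)
    (hgradm : ∀ m x, HasGradientAt (fm m) (fm' m x) x)
    (hsum : ∀ x, f x = ∑ m, fm m x)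
    (μ : ℝ) (hμ : 0 < μ)
    (hsc : ∀ x y, ⟪f' y, x - y⟫ + μ / 2 * ‖x - y‖ ^ 2 ≤ f x - f y)
    (θstar : EuclideanSpace ℝ (Fin p)) (hmin : ∀ x, f θstar ≤ f x)
    (m : Fin M)
    (L' : ℝ) (hL' : 0 < L')
    (hlipm : ∀ x y, linf (fm' m x - fm' m y) ≤ L' * linf (x - y))
    (α : ℝ) (hα : 0 < α)
    (ξ : ℕ → ℝ) (hξ : ∀ d ∈ Finset.Icc 1 D, 0 ≤ ξ d)
    (θ : ℤ → EuclideanSpace ℝ (Fin p)) (k : ℤ)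
    (θhat Qk Qhat : EuclideanSpace ℝ (Fin p))
    (εm εhm : EuclideanSpace ℝ (Fin p))
    (hεm : εm = fm' m (θ k) - Qk)
    (hεhm : εhm = fm' m θhat - Qhat)
    (hcrit : ‖Qk - Qhat‖ ^ 2 ≤
      (1 / (α ^ 2 * M ^ 2)) * ∑ d ∈ Finset.Icc 1 D, ξ d * ‖θ (k + 1 - d) - θ (k - d)‖ ^ 2
      + 3 * (‖εm‖ ^ 2 + ‖εhm‖ ^ 2)) :
    linf (fm' m (θ (k + 1)) - Qhat) ^ 2 ≤
      (12 * L' ^ 2 / μ) * (f (θ (k + 1)) - f θstar + f (θ k) - f θstar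
        + (μ / (4 * L' ^ 2 * α ^ 2 * M ^ 2))
            * ∑ d ∈ Finset.Icc 1 D, ξ d * ‖θ (k + 1 - d) - θ (k - d)‖ ^ 2)
      + (9 * p + 3) * linf εm ^ 2 + 9 * p * linf εhm ^ 2 := by
  have hMR : (1 : ℝ) ≤ (M : ℝ) := by exact_mod_cast hM
  have hM0 : (0 : ℝ) < (M : ℝ) := lt_of_lt_of_le one_pos hMR
  -- the gradient of f vanishes at the minimizer
  have hloc : IsLocalMin f θstar := Filter.Eventually.of_forall hmin
  have hf0 : f' θstar = 0 := by
    have h1 : (InnerProductSpace.toDual ℝ (EuclideanSpace ℝ (Fin p))) (f' θstar) = 0 :=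
      hloc.hasFDerivAt_eq_zero (hgrad θstar)
    exact (InnerProductSpace.toDual ℝ (EuclideanSpace ℝ (Fin p))).injective
      (by rw [h1, map_zero])
  -- strong convexity bound at the minimizer
  have hdist : ∀ x, μ / 2 * ‖x - θstar‖ ^ 2 ≤ f x - f θstar := by
    intro x
    have := hsc x θstar
    rw [hf0] at this
    simpa using this
  set S := ∑ d ∈ Finset.Icc 1 D, ξ d * ‖θ (k + 1 - d) - θ (k - d)‖ ^ 2 with hS
  have hS0 : 0 ≤ S := Finset.sum_nonneg fun d hd => mul_nonneg (hξ d hd) (by positivity)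
  set a := linf (fm' m (θ (k + 1)) - fm' m (θ k)) with ha
  set b := linf εm with hb
  set h := linf εhm with hh
  set c := linf (Qk - Qhat) with hc
  have ha0 : 0 ≤ a := linf_nonneg _
  have hb0 : 0 ≤ b := linf_nonneg _
  have hh0 : 0 ≤ h := linf_nonneg _
  have hc0 : 0 ≤ c := linf_nonneg _
  -- decomposition and triangle inequality
  have hdecomp : fm' m (θ (k + 1)) - Qhat
      = (fm' m (θ (k + 1)) - fm' m (θ k)) + εm + (Qk - Qhat) := by
    rw [hεm]; abel
  have htri : linf (fm' m (θ (k + 1)) - Qhat) ≤ a + b + c := by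
    rw [hdecomp]; exact linf_triangle3 _ _ _
  have ht0 : 0 ≤ linf (fm' m (θ (k + 1)) - Qhat) := linf_nonneg _
  -- bound on a via Lipschitz + strong convexity
  have hlip : a ≤ L' * ‖θ (k + 1) - θ k‖ :=
    (hlipm _ _).trans (by
      have := linf_le_norm (θ (k + 1) - θ k)
      nlinarith)
  have hsplit : ‖θ (k + 1) - θ k‖ ≤ ‖θ (k + 1) - θstar‖ + ‖θ k - θstar‖ := by
    have : θ (k + 1) - θ k = (θ (k + 1) - θstar) - (θ k - θstar) := by abel
    rw [this]
    exact norm_sub_le _ _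
  have hd1 := hdist (θ (k + 1))
  have hd2 := hdist (θ k)
  have hkeyA : μ * a ^ 2 ≤ 4 * L' ^ 2 * ((f (θ (k + 1)) - f θstar) + (f (θ k) - f θstar)) := by
    set n1 := ‖θ (k + 1) - θstar‖ with hn1d
    set n2 := ‖θ k - θstar‖ with hn2d
    have hn1 : (0:ℝ) ≤ n1 := norm_nonneg _
    have hn2 : (0:ℝ) ≤ n2 := norm_nonneg _
    have h5 : a ≤ L' * (n1 + n2) :=
      hlip.trans (mul_le_mul_of_nonneg_left hsplit hL'.le)
    have h6 : a ^ 2 ≤ L' ^ 2 * (n1 + n2) ^ 2 := by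
      have := pow_le_pow_left₀ ha0 h5 2
      rwa [mul_pow] at this
    have h7 : (n1 + n2) ^ 2 ≤ 2 * n1 ^ 2 + 2 * n2 ^ 2 := by linarith [sq_nonneg (n1 - n2), sq_nonneg (n1 + n2)]
    have h8 := mul_le_mul_of_nonneg_left h7 (mul_nonneg hμ.le (sq_nonneg L'))
    have h9 := mul_le_mul_of_nonneg_left h6 hμ.le
    have h10 := mul_le_mul_of_nonneg_left hd1 (by positivity : (0:ℝ) ≤ 4 * L' ^ 2)
    have h11 := mul_le_mul_of_nonneg_left hd2 (by positivity : (0:ℝ) ≤ 4 * L' ^ 2)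
    linarith [h8, h9, h10, h11]
  have hA : 3 * a ^ 2 ≤ (12 * L' ^ 2 / μ) * ((f (θ (k + 1)) - f θstar) + (f (θ k) - f θstar)) := by
    rw [div_mul_eq_mul_div, le_div_iff₀ hμ]
    nlinarith
  -- bound on c via criterion and norm comparisons
  have hcC : 3 * c ^ 2 ≤ 3 / (α ^ 2 * M ^ 2) * S + 9 * p * b ^ 2 + 9 * p * h ^ 2 := by
    have h1 : c ^ 2 ≤ ‖Qk - Qhat‖ ^ 2 :=
      pow_le_pow_left₀ hc0 (linf_le_norm _) 2
    have h2 : ‖εm‖ ^ 2 ≤ p * b ^ 2 := norm_sq_le_linf εm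
    have h3 : ‖εhm‖ ^ 2 ≤ p * h ^ 2 := norm_sq_le_linf εhm
    have h4 : c ^ 2 ≤ 1 / (α ^ 2 * M ^ 2) * S + 3 * (p * b ^ 2 + p * h ^ 2) := by
      calc c ^ 2 ≤ ‖Qk - Qhat‖ ^ 2 := h1
        _ ≤ 1 / (α ^ 2 * M ^ 2) * S + 3 * (‖εm‖ ^ 2 + ‖εhm‖ ^ 2) := hcrit
        _ ≤ 1 / (α ^ 2 * M ^ 2) * S + 3 * (p * b ^ 2 + p * h ^ 2) := by linarith
    have h5 : 3 / (α ^ 2 * (M:ℝ) ^ 2) * S = 3 * (1 / (α ^ 2 * (M:ℝ) ^ 2) * S) := by ring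
    linarith [h4, h5]
  -- combine
  have hsq : linf (fm' m (θ (k + 1)) - Qhat) ^ 2 ≤ 3 * a ^ 2 + 3 * b ^ 2 + 3 * c ^ 2 := by
    nlinarith [sq_nonneg (a - b), sq_nonneg (a - c), sq_nonneg (b - c),
      mul_le_mul htri htri ht0 (by positivity)]
  have hexp : (12 * L' ^ 2 / μ) * ((f (θ (k + 1)) - f θstar) + (f (θ k) - f θstar)
        + (μ / (4 * L' ^ 2 * α ^ 2 * M ^ 2)) * S)
      = (12 * L' ^ 2 / μ) * ((f (θ (k + 1)) - f θstar) + (f (θ k) - f θstar))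
        + 3 / (α ^ 2 * M ^ 2) * S := by
    field_simp
    ring
  have hgoal : linf (fm' m (θ (k + 1)) - Qhat) ^ 2 ≤
      (12 * L' ^ 2 / μ) * ((f (θ (k + 1)) - f θstar) + (f (θ k) - f θstar))
        + 3 / (α ^ 2 * M ^ 2) * S + (9 * p + 3) * b ^ 2 + 9 * p * h ^ 2 := by
    linarith [hsq, hA, hcC]
  calc linf (fm' m (θ (k + 1)) - Qhat) ^ 2
      ≤ (12 * L' ^ 2 / μ) * ((f (θ (k + 1)) - f θstar) + (f (θ k) - f θstar))
        + 3 / (α ^ 2 * M ^ 2) * S + (9 * p + 3) * b ^ 2 + 9 * p * h ^ 2 := hgoal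
    _ = (12 * L' ^ 2 / μ) * (f (θ (k + 1)) - f θstar + (f (θ k) - f θstar)
          + (μ / (4 * L' ^ 2 * α ^ 2 * M ^ 2)) * S)
        + (9 * p + 3) * b ^ 2 + 9 * p * h ^ 2 := by rw [hexp]
    _ = _ := by ring
end

section
/- Let p, M, D ≥ 1 be integers, let f_m : ℝ^p → ℝ be differentiable with ∇f_m L_m-Lipschitz (in the Euclidean norm), let α > 0 and ξ_1 ≥ ξ_2 ≥ … ≥ ξ_D ≥ 0, and let d' be an integer with 1 ≤ d' ≤ D such that L_m² ≤ ξ_{d'}/(3α²M²D). Let θ^{k-D}, …, θ^k ∈ ℝ^p be arbitrary, and for j ∈ {k-d', k} let Q_m^j ∈ ℝ^p with error ε_m^j = ∇f_m(θ^j) - Q_m^j. Then ‖Q_m^{k-d'} - Q_m^k‖₂² ≤ (1/(α²M²))·Σ_{d=1}^D ξ_d·‖θ^{k+1-d} - θ^{k-d}‖₂² + 3·(‖ε_m^k‖₂² + ‖ε_m^{k-d'}‖₂²). -/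
/-- **Key step (inequalities (33)–(35)) in the proof of Proposition 1.** If worker `m`'s
gradient is `L_m`-Lipschitz, `ξ_1 ≥ … ≥ ξ_D ≥ 0`, and `d'` with `1 ≤ d' ≤ D` satisfies
`L_m² ≤ ξ_{d'}/(3α²M²D)`, then for arbitrary iterates `θ^{k-D}, …, θ^k` the
communication-skipping criterion (7a) holds between the quantized gradients at
`θ^{k-d'}` and `θ^k`. -/
theorem skipping_criterion_holds (p M D : ℕ) (hp : 1 ≤ p) (hM : 1 ≤ M) (hD : 1 ≤ D)
    (fm : EuclideanSpace ℝ (Fin p) → ℝ)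
    (fm' : EuclideanSpace ℝ (Fin p) → EuclideanSpace ℝ (Fin p))
    (hgradm : ∀ x, HasGradientAt fm (fm' x) x)
    (Lm : ℝ) (hlipm : ∀ x y, ‖fm' x - fm' y‖ ≤ Lm * ‖x - y‖)
    (α : ℝ) (hα : 0 < α)
    (ξ : ℕ → ℝ) (hξD : 0 ≤ ξ D)
    (hξmono : ∀ d ∈ Finset.Icc 1 (D - 1), ξ (d + 1) ≤ ξ d)
    (d' : ℕ) (hd'1 : 1 ≤ d') (hd'D : d' ≤ D)
    (hLm : Lm ^ 2 ≤ ξ d' / (3 * α ^ 2 * M ^ 2 * D))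
    (θ : ℤ → EuclideanSpace ℝ (Fin p)) (k : ℤ)
    (Qk Qkd : EuclideanSpace ℝ (Fin p))
    (εk εkd : EuclideanSpace ℝ (Fin p))
    (hεk : εk = fm' (θ k) - Qk)
    (hεkd : εkd = fm' (θ (k - d')) - Qkd) :
    ‖Qkd - Qk‖ ^ 2 ≤
      (1 / (α ^ 2 * M ^ 2)) * ∑ d ∈ Finset.Icc 1 D, ξ d * ‖θ (k + 1 - d) - θ (k - d)‖ ^ 2
      + 3 * (‖εk‖ ^ 2 + ‖εkd‖ ^ 2) := by
  -- antitonicity of ξ on [1, D]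
  have anti : ∀ a b : ℕ, 1 ≤ a → a ≤ b → b ≤ D → ξ b ≤ ξ a := by
    intro a b ha hab
    induction b, hab using Nat.le_induction with
    | base => intro _; exact le_rfl
    | succ n hn ih =>
      intro hsD
      have hnD : n ≤ D - 1 := by omega
      have h1n : 1 ≤ n := le_trans ha hn
      have h := hξmono n (Finset.mem_Icc.mpr ⟨h1n, hnD⟩)
      exact le_trans h (ih (by omega))
  have hnonneg : ∀ d : ℕ, 1 ≤ d → d ≤ D → 0 ≤ ξ d := fun d h1 h2 =>
    le_trans hξD (anti d D h1 h2 le_rfl)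
  set A := fm' (θ (k - d')) - fm' (θ k) with hAdef
  have hQA : Qkd - Qk = A + εk - εkd := by
    rw [hεk, hεkd, hAdef]; abel
  have h1 : ‖Qkd - Qk‖ ≤ ‖A‖ + ‖εk‖ + ‖εkd‖ := by
    rw [hQA]
    calc ‖A + εk - εkd‖ ≤ ‖A + εk‖ + ‖εkd‖ := norm_sub_le _ _
      _ ≤ ‖A‖ + ‖εk‖ + ‖εkd‖ := by gcongr; exact norm_add_le _ _
  have h2 : ‖Qkd - Qk‖ ^ 2 ≤ 3 * (‖A‖ ^ 2 + ‖εk‖ ^ 2 + ‖εkd‖ ^ 2) := by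
    nlinarith [norm_nonneg (Qkd - Qk), norm_nonneg A, norm_nonneg εk, norm_nonneg εkd,
      sq_nonneg (‖A‖ - ‖εk‖), sq_nonneg (‖A‖ - ‖εkd‖), sq_nonneg (‖εk‖ - ‖εkd‖)]
  suffices hmain : 3 * ‖A‖ ^ 2 ≤
      (1 / (α ^ 2 * M ^ 2)) * ∑ d ∈ Finset.Icc 1 D, ξ d * ‖θ (k + 1 - d) - θ (k - d)‖ ^ 2 by
    linarith
  -- Lipschitz bound
  have hlip : ‖A‖ ≤ Lm * ‖θ k - θ (k - d')‖ := by
    rw [hAdef, ← norm_sub_rev (θ (k - d'))]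
    exact hlipm _ _
  -- telescoping
  have htel : θ k - θ (k - (d' : ℤ)) =
      ∑ i ∈ Finset.range d', (θ (k - i) - θ (k - ((i : ℤ) + 1))) := by
    have h := Finset.sum_range_sub' (fun j : ℕ => θ (k - (j : ℤ))) d'
    simp only [Nat.cast_add, Nat.cast_one, Nat.cast_zero, sub_zero] at h
    exact h.symm
  set S : ℝ := ∑ i ∈ Finset.range d', ‖θ (k - i) - θ (k - ((i : ℤ) + 1))‖ ^ 2 with hSdef
  have hS_nonneg : 0 ≤ S := Finset.sum_nonneg fun i _ => sq_nonneg _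
  -- Cauchy–Schwarz
  have hCS : ‖θ k - θ (k - (d' : ℤ))‖ ^ 2 ≤ (d' : ℝ) * S := by
    rw [htel]
    calc ‖∑ i ∈ Finset.range d', (θ (k - i) - θ (k - ((i : ℤ) + 1)))‖ ^ 2
        ≤ (∑ i ∈ Finset.range d', ‖θ (k - i) - θ (k - ((i : ℤ) + 1))‖) ^ 2 := by
          have := norm_sum_le (Finset.range d')
            (fun i : ℕ => θ (k - i) - θ (k - ((i : ℤ) + 1)))
          exact pow_le_pow_left₀ (norm_nonneg _) this 2
      _ ≤ (d' : ℝ) * S := by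
          simpa using sq_sum_le_card_mul_sum_sq
            (s := Finset.range d') (f := fun i : ℕ => ‖θ (k - i) - θ (k - ((i : ℤ) + 1))‖)
  have hA2 : ‖A‖ ^ 2 ≤ Lm ^ 2 * ‖θ k - θ (k - (d' : ℤ))‖ ^ 2 := by
    nlinarith [norm_nonneg A, norm_nonneg (θ k - θ (k - (d' : ℤ)))]
  have hDpos : (0 : ℝ) < D := by exact_mod_cast hD
  have hMpos : (0 : ℝ) < M := by exact_mod_cast hM
  have hξd'nn : 0 ≤ ξ d' := hnonneg d' hd'1 hd'D
  have hd'D' : (d' : ℝ) ≤ D := by exact_mod_cast hd'D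
  -- step: 3‖A‖² ≤ (ξ d' / (α²M²)) * S
  have hstep : 3 * ‖A‖ ^ 2 ≤ (ξ d' / (α ^ 2 * M ^ 2)) * S := by
    have h3 : ‖A‖ ^ 2 ≤ Lm ^ 2 * ((d' : ℝ) * S) :=
      hA2.trans (mul_le_mul_of_nonneg_left hCS (sq_nonneg Lm))
    have h4 : Lm ^ 2 * ((d' : ℝ) * S) ≤ Lm ^ 2 * ((D : ℝ) * S) := by
      have := mul_le_mul_of_nonneg_right hd'D' hS_nonneg
      exact mul_le_mul_of_nonneg_left this (sq_nonneg Lm)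
    have hLm' : 3 * (Lm ^ 2 * (D : ℝ)) ≤ ξ d' / (α ^ 2 * M ^ 2) := by
      rw [le_div_iff₀ (by positivity)] at hLm ⊢
      calc 3 * (Lm ^ 2 * (D : ℝ)) * (α ^ 2 * M ^ 2)
          = Lm ^ 2 * (3 * α ^ 2 * M ^ 2 * D) := by ring
        _ ≤ ξ d' := hLm
    calc 3 * ‖A‖ ^ 2 ≤ 3 * (Lm ^ 2 * ((D : ℝ) * S)) := by linarith
      _ = (3 * (Lm ^ 2 * (D : ℝ))) * S := by ring
      _ ≤ (ξ d' / (α ^ 2 * M ^ 2)) * S := mul_le_mul_of_nonneg_right hLm' hS_nonneg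
  -- compare with the ξ-weighted sum
  have key : ξ d' * S ≤ ∑ d ∈ Finset.Icc 1 d', ξ d * ‖θ (k + 1 - d) - θ (k - d)‖ ^ 2 := by
    rw [hSdef, Finset.mul_sum, show Finset.Icc 1 d' = Finset.Ico 1 (d' + 1) from
      (Finset.Ico_add_one_right_eq_Icc 1 d').symm, Finset.sum_Ico_eq_sum_range]
    simp only [Nat.add_sub_cancel]
    apply Finset.sum_le_sum
    intro i hi
    rw [Finset.mem_range] at hi
    have harg1 : (k + 1 - ((1 + i : ℕ) : ℤ)) = k - i := by push_cast; ring
    have harg2 : (k - ((1 + i : ℕ) : ℤ)) = k - ((i : ℤ) + 1) := by push_cast; ring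
    rw [harg1, harg2]
    have : ξ d' ≤ ξ (1 + i) := anti (1 + i) d' (by omega) (by omega) hd'D
    exact mul_le_mul_of_nonneg_right this (sq_nonneg _)
  have hsum1 : (ξ d' / (α ^ 2 * M ^ 2)) * S ≤
      (1 / (α ^ 2 * M ^ 2)) *
      ∑ d ∈ Finset.Icc 1 d', ξ d * ‖θ (k + 1 - d) - θ (k - d)‖ ^ 2 := by
    calc (ξ d' / (α ^ 2 * M ^ 2)) * S = (1 / (α ^ 2 * M ^ 2)) * (ξ d' * S) := by ring
      _ ≤ _ := mul_le_mul_of_nonneg_left key (by positivity)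
  have hsum2 : ∑ d ∈ Finset.Icc 1 d', ξ d * ‖θ (k + 1 - d) - θ (k - d)‖ ^ 2 ≤
      ∑ d ∈ Finset.Icc 1 D, ξ d * ‖θ (k + 1 - d) - θ (k - d)‖ ^ 2 := by
    apply Finset.sum_le_sum_of_subset_of_nonneg
    · exact Finset.Icc_subset_Icc_right hd'D
    · intro d hd _
      rw [Finset.mem_Icc] at hd
      exact mul_nonneg (hnonneg d hd.1 hd.2) (sq_nonneg _)
  calc 3 * ‖A‖ ^ 2 ≤ _ := hstep
    _ ≤ _ := hsum1
    _ ≤ (1 / (α ^ 2 * M ^ 2)) * ∑ d ∈ Finset.Icc 1 D, ξ d * ‖θ (k + 1 - d) - θ (k - d)‖ ^ 2 :=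
        mul_le_mul_of_nonneg_left hsum2 (by positivity)
end
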